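/- arXiv:1811.03129 — 5 statements merged into one kernel-verified Lean document; each statement's English description precedes it below -/
import Mathlib

section
/- Suppose the graph defined by the nonnegative symmetric weight matrix W (zero diagonal) is connected, and suppose there exist x⋆ and y_1⋆,…,y_J⋆ such that (x⋆, y_j⋆) minimizes f_j for every j∈[J]. Then min_z g(z) = min_{x,y} f(x,y) where f(x,y) = Σ_j f_j(x, y_j), and g attains its global minimum only at points z with x^1 = x^2 = ⋯ = x^J. -/
/-!
Both objectives are bounded below termwise: each `f_j` by its value at `(x⋆, y_j⋆)`, and the
consensus penalty `Σ_j Σ_i w_{ji} ‖x^j - x^i‖²` by `0`. The consensus point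
`(x⋆, …, x⋆, y⋆)` attains both bounds, so the two minima agree. At any minimizer of `g`
the penalty must vanish, which forces `x^a = x^b` along every positive-weight edge, and
connectivity propagates this to all pairs of nodes.
-/

open Finset

section ConsensusPenalty

variable {ι E : Type*} [Fintype ι] [NormedAddCommGroup E]

def consensusPenalty (W : ι → ι → ℝ) (x : ι → E) : ℝ :=
  ∑ j, ∑ i, W j i * ‖x j - x i‖ ^ 2

variable {W : ι → ι → ℝ}

@[simp]
theorem consensusPenalty_const (v : E) : consensusPenalty W (fun _ => v) = 0 := by
  simp [consensusPenalty]

theorem consensusPenalty_nonneg (hW : ∀ i j, 0 ≤ W i j) (x : ι → E) :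
    0 ≤ consensusPenalty W x :=
  sum_nonneg fun j _ => sum_nonneg fun i _ => mul_nonneg (hW j i) (sq_nonneg _)

theorem eq_of_consensusPenalty_eq_zero (hW : ∀ i j, 0 ≤ W i j) {x : ι → E}
    (hx : consensusPenalty W x = 0) {a b : ι} (hab : 0 < W a b) : x a = x b := by
  have hrow := (sum_eq_zero_iff_of_nonneg fun j _ =>
    sum_nonneg fun i _ => mul_nonneg (hW j i) (sq_nonneg _)).mp hx a (mem_univ a)
  have hterm := (sum_eq_zero_iff_of_nonneg fun i _ =>
    mul_nonneg (hW a i) (sq_nonneg _)).mp hrow b (mem_univ b)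
  have hnorm : ‖x a - x b‖ = 0 := pow_eq_zero_iff two_ne_zero |>.mp <|
    (mul_eq_zero.mp hterm).resolve_left hab.ne'
  exact sub_eq_zero.mp (norm_eq_zero.mp hnorm)

theorem eq_of_consensusPenalty_eq_zero_of_reflTransGen (hW : ∀ i j, 0 ≤ W i j) {x : ι → E}
    (hx : consensusPenalty W x = 0) {i j : ι}
    (hij : Relation.ReflTransGen (fun a b => 0 < W a b) i j) : x i = x j := by
  induction hij with
  | refl => rfl
  | tail _ hbc ih => exact ih.trans (eq_of_consensusPenalty_eq_zero hW hx hbc)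

end ConsensusPenalty

theorem dgd_min_g_eq_min_f_general
    (J n : ℕ) (m : Fin J → ℕ)
    (f : ∀ j : Fin J,
      WithLp 2 (EuclideanSpace ℝ (Fin n) × EuclideanSpace ℝ (Fin (m j))) → ℝ)
    (W : Fin J → Fin J → ℝ)
    (hWnonneg : ∀ i j, 0 ≤ W i j)
    -- connectivity: any two nodes are joined by a path of positive-weight edges
    (hconn : ∀ i j : Fin J, Relation.ReflTransGen (fun a b => 0 < W a b) i j)
    (xstar : EuclideanSpace ℝ (Fin n))
    (ystar : ∀ j : Fin J, EuclideanSpace ℝ (Fin (m j)))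
    (hmin : ∀ j, ∀ u v, f j ((WithLp.equiv 2 _).symm (xstar, ystar j)) ≤
        f j ((WithLp.equiv 2 _).symm (u, v)))
    (g : WithLp 2 ((PiLp 2 fun _ : Fin J => EuclideanSpace ℝ (Fin n)) ×
          (PiLp 2 fun j : Fin J => EuclideanSpace ℝ (Fin (m j)))) → ℝ)
    (hg : ∀ z, g z = ∑ j, (f j ((WithLp.equiv 2 _).symm (z.ofLp.1 j, z.ofLp.2 j))
          + ∑ i, W j i * ‖z.ofLp.1 j - z.ofLp.1 i‖ ^ 2)) :
    -- `Σ_j f_j(x⋆, y_j⋆)` is the least value of both f and g, and g attains it only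
    -- on the consensus subspace
    IsLeast (Set.range fun p : EuclideanSpace ℝ (Fin n) ×
        (∀ j : Fin J, EuclideanSpace ℝ (Fin (m j))) =>
        ∑ j, f j ((WithLp.equiv 2 _).symm (p.1, p.2 j)))
      (∑ j, f j ((WithLp.equiv 2 _).symm (xstar, ystar j))) ∧
    IsLeast (Set.range g) (∑ j, f j ((WithLp.equiv 2 _).symm (xstar, ystar j))) ∧
    (∀ z, g z = (∑ j, f j ((WithLp.equiv 2 _).symm (xstar, ystar j))) →
      ∀ i j, z.ofLp.1 i = z.ofLp.1 j) := by
  have hg_split : ∀ z, g z = ∑ j, f j ((WithLp.equiv 2 _).symm (z.ofLp.1 j, z.ofLp.2 j)) +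
      consensusPenalty W (fun j => z.ofLp.1 j) := fun z => by
    rw [hg, sum_add_distrib]; rfl
  have hf_ge : ∀ (x : Fin J → EuclideanSpace ℝ (Fin n)) (y : ∀ j, EuclideanSpace ℝ (Fin (m j))),
      ∑ j, f j ((WithLp.equiv 2 _).symm (xstar, ystar j)) ≤
        ∑ j, f j ((WithLp.equiv 2 _).symm (x j, y j)) :=
    fun x y => sum_le_sum fun j _ => hmin j _ _
  have hg_ge : ∀ z, ∑ j, f j ((WithLp.equiv 2 _).symm (xstar, ystar j)) ≤ g z := fun z => by
    rw [hg_split]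
    linarith [hf_ge (fun j => z.ofLp.1 j) (fun j => z.ofLp.2 j),
      consensusPenalty_nonneg hWnonneg (fun j => z.ofLp.1 j)]
  refine ⟨⟨⟨(xstar, ystar), rfl⟩, ?_⟩, ⟨⟨WithLp.toLp 2 (WithLp.toLp 2 fun _ => xstar,
    WithLp.toLp 2 ystar), ?_⟩, ?_⟩, ?_⟩
  · rintro _ ⟨p, rfl⟩
    exact hf_ge (fun _ => p.1) p.2
  · rw [hg_split, consensusPenalty_const, add_zero]
  · rintro _ ⟨z, rfl⟩
    exact hg_ge z
  · intro z hz i j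
    have hpenalty : consensusPenalty W (fun j => z.ofLp.1 j) = 0 := by
      rw [hg_split] at hz
      linarith [hf_ge (fun j => z.ofLp.1 j) (fun j => z.ofLp.2 j),
        consensusPenalty_nonneg hWnonneg (fun j => z.ofLp.1 j)]
    exact eq_of_consensusPenalty_eq_zero_of_reflTransGen hWnonneg hpenalty (hconn i j)

/-- Suppose the graph of the nonnegative symmetric weight matrix `W`
(zero diagonal) is connected, and there exist `x⋆` and `y_1⋆,…,y_J⋆` such that `(x⋆, y_j⋆)`
minimizes `f_j` for every `j`.  Then `min_z g(z) = min_{x,y} f(x,y)` where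
`f(x,y) = Σ_j f_j(x,y_j)`, and `g` attains its global minimum only at consensus points
`x^1 = ⋯ = x^J`. -/
theorem dgd_min_g_eq_min_f
    (J n : ℕ) (m : Fin J → ℕ)
    (f : ∀ j : Fin J,
      WithLp 2 (EuclideanSpace ℝ (Fin n) × EuclideanSpace ℝ (Fin (m j))) → ℝ)
    (W : Fin J → Fin J → ℝ)
    (hWsymm : ∀ i j, W i j = W j i)
    (hWnonneg : ∀ i j, 0 ≤ W i j)
    (hWdiag : ∀ j, W j j = 0)
    -- connectivity: any two nodes are joined by a path of positive-weight edges
    (hconn : ∀ i j : Fin J, Relation.ReflTransGen (fun a b => 0 < W a b) i j)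
    (xstar : EuclideanSpace ℝ (Fin n))
    (ystar : ∀ j : Fin J, EuclideanSpace ℝ (Fin (m j)))
    (hmin : ∀ j, ∀ u v, f j ((WithLp.equiv 2 _).symm (xstar, ystar j)) ≤
        f j ((WithLp.equiv 2 _).symm (u, v)))
    (g : WithLp 2 ((PiLp 2 fun _ : Fin J => EuclideanSpace ℝ (Fin n)) ×
          (PiLp 2 fun j : Fin J => EuclideanSpace ℝ (Fin (m j)))) → ℝ)
    (hg : ∀ z, g z = ∑ j, (f j ((WithLp.equiv 2 _).symm (z.ofLp.1 j, z.ofLp.2 j))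
          + ∑ i, W j i * ‖z.ofLp.1 j - z.ofLp.1 i‖ ^ 2)) :
    -- `Σ_j f_j(x⋆, y_j⋆)` is the least value of both f and g, and g attains it only
    -- on the consensus subspace
    IsLeast (Set.range fun p : EuclideanSpace ℝ (Fin n) ×
        (∀ j : Fin J, EuclideanSpace ℝ (Fin (m j))) =>
        ∑ j, f j ((WithLp.equiv 2 _).symm (p.1, p.2 j)))
      (∑ j, f j ((WithLp.equiv 2 _).symm (xstar, ystar j))) ∧
    IsLeast (Set.range g) (∑ j, f j ((WithLp.equiv 2 _).symm (xstar, ystar j))) ∧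
    (∀ z, g z = (∑ j, f j ((WithLp.equiv 2 _).symm (xstar, ystar j))) →
      ∀ i j, z.ofLp.1 i = z.ofLp.1 j) :=
  dgd_min_g_eq_min_f_general J n m f W hWnonneg hconn xstar ystar hmin g hg
end

section
/- Suppose the weight matrix W is symmetric with nonnegative entries, zero diagonal, and defines a connected graph, and suppose each f_j satisfies the symmetry property ⟨∇_x f_j(x, y_j), x⟩ = ⟨∇_{y_j} f_j(x, y_j), y_j⟩ for all (x, y_j). Then every critical point of g(z) = Σ_j (f_j(x^j, y_j) + Σ_i w_{ji} ‖x^j − x^i‖²) satisfies x^1 = x^2 = ⋯ = x^J. -/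
set_option maxHeartbeats 1000000

open scoped RealInnerProductSpace

/-- If the symmetric nonnegative weight matrix `W` (zero diagonal) defines a
connected graph and each `f_j` satisfies the symmetry property
`⟨∇_x f_j(x,y_j), x⟩ = ⟨∇_{y_j} f_j(x,y_j), y_j⟩`, then every critical point of
`g(z) = Σ_j (f_j(x^j,y_j) + Σ_i w_{ji}‖x^j − x^i‖²)` satisfies `x^1 = ⋯ = x^J`. -/
theorem dgd_critical_points_are_consensus
    (J n : ℕ) (m : Fin J → ℕ)
    (f : ∀ j : Fin J,
      WithLp 2 (EuclideanSpace ℝ (Fin n) × EuclideanSpace ℝ (Fin (m j))) → ℝ)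
    (hf : ∀ j, ContDiff ℝ 1 (f j))
    (W : Fin J → Fin J → ℝ)
    (hWsymm : ∀ i j, W i j = W j i)
    (hWnonneg : ∀ i j, 0 ≤ W i j)
    (hWdiag : ∀ j, W j j = 0)
    (hconn : ∀ i j : Fin J, Relation.ReflTransGen (fun a b => 0 < W a b) i j)
    -- the symmetry property ⟨∇_x f_j(x,y), x⟩ = ⟨∇_y f_j(x,y), y⟩, expressed via
    -- directional derivatives in the directions (x,0) and (0,y)
    (hsymgrad : ∀ j, ∀ p : WithLp 2 (EuclideanSpace ℝ (Fin n) × EuclideanSpace ℝ (Fin (m j))),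
      fderiv ℝ (f j) p ((WithLp.equiv 2 _).symm (p.ofLp.1, 0)) =
      fderiv ℝ (f j) p ((WithLp.equiv 2 _).symm (0, p.ofLp.2)))
    (g : WithLp 2 ((PiLp 2 fun _ : Fin J => EuclideanSpace ℝ (Fin n)) ×
          (PiLp 2 fun j : Fin J => EuclideanSpace ℝ (Fin (m j)))) → ℝ)
    (hg : ∀ z, g z = ∑ j, (f j ((WithLp.equiv 2 _).symm (z.ofLp.1 j, z.ofLp.2 j))
          + ∑ i, W j i * ‖z.ofLp.1 j - z.ofLp.1 i‖ ^ 2))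
    (z : WithLp 2 ((PiLp 2 fun _ : Fin J => EuclideanSpace ℝ (Fin n)) ×
          (PiLp 2 fun j : Fin J => EuclideanSpace ℝ (Fin (m j)))))
    -- z is a critical point of g
    (hcrit : fderiv ℝ g z = 0) :
    ∀ i j, z.ofLp.1 i = z.ofLp.1 j := by
  classical
  let E := EuclideanSpace ℝ (Fin n)
  let X := PiLp 2 fun _ : Fin J => E
  let Y := PiLp 2 fun j : Fin J => EuclideanSpace ℝ (Fin (m j))
  let A : WithLp 2 (X × Y) →L[ℝ] X × Y :=
    (WithLp.prodContinuousLinearEquiv 2 ℝ X Y).toContinuousLinearMap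
  let Fx : ∀ j : Fin J, WithLp 2 (X × Y) →L[ℝ] E :=
    fun j => (PiLp.proj 2 _ j).comp ((ContinuousLinearMap.fst ℝ X Y).comp A)
  let Fy : ∀ j : Fin J, WithLp 2 (X × Y) →L[ℝ] EuclideanSpace ℝ (Fin (m j)) :=
    fun j => (PiLp.proj 2 _ j).comp ((ContinuousLinearMap.snd ℝ X Y).comp A)
  let Φ : ∀ j : Fin J, WithLp 2 (X × Y) →L[ℝ] WithLp 2 (E × EuclideanSpace ℝ (Fin (m j))) :=
    fun j => ((WithLp.prodContinuousLinearEquiv 2 ℝ E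
        (EuclideanSpace ℝ (Fin (m j)))).symm.toContinuousLinearMap).comp
      ((Fx j).prod (Fy j))
  have hΦapp : ∀ j v, Φ j v = (WithLp.equiv 2 _).symm (v.ofLp.1 j, v.ofLp.2 j) := fun j v => rfl
  let D : WithLp 2 (X × Y) →L[ℝ] ℝ :=
    ∑ j, ((fderiv ℝ (f j) (Φ j z)).comp (Φ j)
      + ∑ i, (W j i) • ((2 : ℕ) • (innerSL ℝ (z.ofLp.1 j - z.ofLp.1 i)).comp (Fx j - Fx i)))
  have hD : HasFDerivAt g D z := by
    have hgf : g = fun w => ∑ j, (f j ((WithLp.equiv 2 _).symm (w.ofLp.1 j, w.ofLp.2 j))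
        + ∑ i, W j i * ‖w.ofLp.1 j - w.ofLp.1 i‖ ^ 2) := funext hg
    rw [hgf]
    apply HasFDerivAt.fun_sum
    intro j _
    apply HasFDerivAt.add
    · have h1 : HasFDerivAt (f j ∘ (Φ j)) ((fderiv ℝ (f j) (Φ j z)).comp (Φ j)) z :=
        (((hf j).differentiable one_ne_zero (Φ j z)).hasFDerivAt).comp z (Φ j).hasFDerivAt
      exact h1
    · apply HasFDerivAt.fun_sum
      intro i _
      have h2 : HasFDerivAt (fun w => ‖(Fx j - Fx i) w‖ ^ 2)
          ((2 : ℕ) • (innerSL ℝ ((Fx j - Fx i) z)).comp (Fx j - Fx i)) z :=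
        ((Fx j - Fx i).hasFDerivAt (x := z)).norm_sq
      have h3 := h2.const_mul (W j i)
      exact h3
  have hD0 : D = 0 := by rw [← hD.fderiv]; exact hcrit
  have hDapp : ∀ v : WithLp 2 (X × Y), (∑ j, (fderiv ℝ (f j) (Φ j z) (Φ j v)
      + ∑ i, W j i * (2 * ⟪z.ofLp.1 j - z.ofLp.1 i, v.ofLp.1 j - v.ofLp.1 i⟫))) = 0 := by
    intro v
    have h0 : D v = 0 := by rw [hD0]; rfl
    rw [← h0]
    simp only [D, ContinuousLinearMap.sum_apply, ContinuousLinearMap.add_apply,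
      ContinuousLinearMap.smul_apply, ContinuousLinearMap.coe_smul', Pi.smul_apply,
      ContinuousLinearMap.comp_apply, ContinuousLinearMap.sub_apply, innerSL_apply_apply,
      smul_eq_mul, nsmul_eq_mul, Nat.cast_ofNat]
    rfl
  -- direction (0, y)
  have hy : (∑ j, fderiv ℝ (f j) (Φ j z)
      ((WithLp.equiv 2 (E × EuclideanSpace ℝ (Fin (m j)))).symm (0, z.ofLp.2 j))) = 0 := by
    have h := hDapp ((WithLp.equiv 2 (X × Y)).symm (0, z.ofLp.2))
    have hc1 : ∀ j : Fin J, (((WithLp.equiv 2 (X × Y)).symm (0, z.ofLp.2)).ofLp.1 j : E) = 0 :=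
      fun j => rfl
    have hc2 : ∀ j : Fin J, Φ j ((WithLp.equiv 2 (X × Y)).symm (0, z.ofLp.2))
        = (WithLp.equiv 2 (E × EuclideanSpace ℝ (Fin (m j)))).symm (0, z.ofLp.2 j) :=
      fun j => rfl
    simp only [hc1, hc2, sub_zero, inner_zero_right, mul_zero, Finset.sum_const_zero,
      add_zero] at h
    exact h
  -- direction (x, 0)
  have hx : (∑ j, fderiv ℝ (f j) (Φ j z)
      ((WithLp.equiv 2 (E × EuclideanSpace ℝ (Fin (m j)))).symm (z.ofLp.1 j, 0)))
      + ∑ j, ∑ i, W j i * (2 * ⟪z.ofLp.1 j - z.ofLp.1 i, z.ofLp.1 j - z.ofLp.1 i⟫) = 0 := by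
    have h := hDapp ((WithLp.equiv 2 (X × Y)).symm (z.ofLp.1, 0))
    have hc1 : ∀ j : Fin J, (((WithLp.equiv 2 (X × Y)).symm (z.ofLp.1, 0)).ofLp.1 j : E) = z.ofLp.1 j :=
      fun j => rfl
    have hc2 : ∀ j : Fin J, Φ j ((WithLp.equiv 2 (X × Y)).symm (z.ofLp.1, 0))
        = (WithLp.equiv 2 (E × EuclideanSpace ℝ (Fin (m j)))).symm (z.ofLp.1 j, 0) :=
      fun j => rfl
    simp only [hc1, hc2] at h
    rw [← Finset.sum_add_distrib]
    exact h
  have hsum0 : (∑ j, ∑ i, W j i * (2 * ⟪z.ofLp.1 j - z.ofLp.1 i, z.ofLp.1 j - z.ofLp.1 i⟫)) = 0 := by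
    have hxy : (∑ j, fderiv ℝ (f j) (Φ j z)
        ((WithLp.equiv 2 (E × EuclideanSpace ℝ (Fin (m j)))).symm (z.ofLp.1 j, 0)))
        = ∑ j, fderiv ℝ (f j) (Φ j z)
        ((WithLp.equiv 2 (E × EuclideanSpace ℝ (Fin (m j)))).symm (0, z.ofLp.2 j)) := by
      refine Finset.sum_congr rfl fun j _ => ?_
      exact hsymgrad j (Φ j z)
    rw [hxy, hy] at hx
    linarith
  have hterm : ∀ a b : Fin J, W a b * (2 * ⟪z.ofLp.1 a - z.ofLp.1 b, z.ofLp.1 a - z.ofLp.1 b⟫) = 0 := by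
    have hnn : ∀ a b : Fin J, 0 ≤ W a b * (2 * ⟪z.ofLp.1 a - z.ofLp.1 b, z.ofLp.1 a - z.ofLp.1 b⟫) := by
      intro a b
      have h1 := real_inner_self_nonneg (x := z.ofLp.1 a - z.ofLp.1 b)
      have h2 := hWnonneg a b
      positivity
    intro a b
    have h := (Finset.sum_eq_zero_iff_of_nonneg
      (fun j _ => Finset.sum_nonneg fun i _ => hnn j i)).mp hsum0 a (Finset.mem_univ a)
    exact (Finset.sum_eq_zero_iff_of_nonneg (fun i _ => hnn a i)).mp h b (Finset.mem_univ b)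
  have hedge : ∀ a b : Fin J, 0 < W a b → z.ofLp.1 a = z.ofLp.1 b := by
    intro a b hw
    have h2 : ⟪z.ofLp.1 a - z.ofLp.1 b, z.ofLp.1 a - z.ofLp.1 b⟫ = (0 : ℝ) := by
      have h := hterm a b
      rcases mul_eq_zero.mp h with h' | h'
      · exact absurd h' (ne_of_gt hw)
      · rcases mul_eq_zero.mp h' with h'' | h''
        · norm_num at h''
        · exact h''
    exact sub_eq_zero.mp (inner_self_eq_zero.mp h2)
  intro i j
  induction hconn i j with
  | refl => rfl
  | tail _ e ih => exact ih.trans (hedge _ _ e)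
end

section
/- Let z = (x,…,x, y) be a consensus critical point of g(z) = Σ_j (f_j(x^j, y_j) + Σ_i w_{ji}‖x^j − x^i‖²). If (x, y) is a strict saddle of f(x,y) = Σ_j f_j(x, y_j) (i.e., the Hessian of f at (x,y) has a negative eigenvalue), then z is a strict saddle of g. -/
/-!
On consensus points the penalty `Σ w_{ji}‖x^j - x^i‖²` vanishes identically, so `g` composed with
the linear consensus embedding `(x, y) ↦ (x, …, x, y)` is exactly `f`. Since precomposition with a
linear map `L` turns the Hessian `D²g(Lp)` into `D²g(Lp)(L·, L·)`, a direction of negative curvature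
`q` of `f` at `(x, y)` yields the direction `L q` of negative curvature of `g` at `z`.
-/

open WithLp

section Hessian

variable {𝕜 E F G : Type*} [NontriviallyNormedField 𝕜]
  [NormedAddCommGroup E] [NormedSpace 𝕜 E] [NormedAddCommGroup F] [NormedSpace 𝕜 F]
  [NormedAddCommGroup G] [NormedSpace 𝕜 G]

theorem fderiv_fderiv_comp_continuousLinearMap_apply {g : F → G} (hg : ContDiff 𝕜 2 g)
    (L : E →L[𝕜] F) (p u v : E) :
    fderiv 𝕜 (fderiv 𝕜 (g ∘ L)) p u v = fderiv 𝕜 (fderiv 𝕜 g) (L p) (L u) (L v) := by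
  calc fderiv 𝕜 (fderiv 𝕜 (g ∘ L)) p u v
      = iteratedFDeriv 𝕜 2 (g ∘ L) p ![u, v] := by rw [iteratedFDeriv_two_apply]; rfl
    _ = iteratedFDeriv 𝕜 2 g (L p) ![L u, L v] := by
      rw [L.iteratedFDeriv_comp_right hg p le_rfl,
        ContinuousMultilinearMap.compContinuousLinearMap_apply]
      congr 1
      ext i
      fin_cases i <;> rfl
    _ = fderiv 𝕜 (fderiv 𝕜 g) (L p) (L u) (L v) := by rw [iteratedFDeriv_two_apply]; rfl

end Hessian

section Consensus

noncomputable def consensusEmbedding (ι : Type*) [Fintype ι] (E Y : Type*)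
    [NormedAddCommGroup E] [NormedSpace ℝ E] [NormedAddCommGroup Y] [NormedSpace ℝ Y] :
    WithLp 2 (E × Y) →L[ℝ] WithLp 2 ((PiLp 2 fun _ : ι => E) × Y) :=
  (prodContinuousLinearEquiv 2 ℝ _ _).symm.toContinuousLinearMap ∘L
    (((PiLp.continuousLinearEquiv 2 ℝ _).symm.toContinuousLinearMap ∘L
      ContinuousLinearMap.pi fun _ => fstL 2 ℝ E Y).prod (sndL 2 ℝ E Y))

variable {ι E : Type*} [Fintype ι] [NormedAddCommGroup E] [InnerProductSpace ℝ E]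
  {Y : ι → Type*} [∀ j, NormedAddCommGroup (Y j)] [∀ j, NormedSpace ℝ (Y j)]

def consensusObjective (f : ∀ j, WithLp 2 (E × Y j) → ℝ) (W : ι → ι → ℝ)
    (z : WithLp 2 ((PiLp 2 fun _ : ι => E) × PiLp 2 Y)) : ℝ :=
  ∑ j, (f j (toLp 2 (z.ofLp.1 j, z.ofLp.2 j)) + ∑ i, W j i * ‖z.ofLp.1 j - z.ofLp.1 i‖ ^ 2)

theorem contDiff_consensusObjective {k : WithTop ℕ∞} {f : ∀ j, WithLp 2 (E × Y j) → ℝ}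
    (hf : ∀ j, ContDiff ℝ k (f j)) (W : ι → ι → ℝ) : ContDiff ℝ k (consensusObjective f W) := by
  let X := fstL 2 ℝ (PiLp 2 fun _ : ι => E) (PiLp 2 Y)
  have hlocal (j : ι) : ContDiff ℝ k fun z : WithLp 2 ((PiLp 2 fun _ : ι => E) × PiLp 2 Y) =>
      f j (toLp 2 (z.ofLp.1 j, z.ofLp.2 j)) :=
    (hf j).comp ((prodContinuousLinearEquiv 2 ℝ _ _).symm.toContinuousLinearMap ∘L
      ((PiLp.proj 2 _ j ∘L X).prod (PiLp.proj 2 Y j ∘L sndL 2 ℝ _ _))).contDiff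
  have hpenalty (i j : ι) : ContDiff ℝ k fun z : WithLp 2 ((PiLp 2 fun _ : ι => E) × PiLp 2 Y) =>
      ‖z.ofLp.1 j - z.ofLp.1 i‖ ^ 2 :=
    ((PiLp.proj 2 _ j ∘L X).contDiff.sub (PiLp.proj 2 _ i ∘L X).contDiff).norm_sq ℝ
  exact ContDiff.sum fun j _ =>
    (hlocal j).add (ContDiff.sum fun i _ => contDiff_const.mul (hpenalty i j))

theorem consensusObjective_consensusEmbedding (f : ∀ j, WithLp 2 (E × Y j) → ℝ) (W : ι → ι → ℝ)
    (p : WithLp 2 (E × PiLp 2 Y)) :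
    consensusObjective f W (consensusEmbedding ι E _ p) =
      ∑ j, f j (toLp 2 (p.ofLp.1, p.ofLp.2 j)) := by
  simp [consensusObjective, consensusEmbedding]

end Consensus

theorem strict_saddle_of_f_gives_strict_saddle_of_g_general
    (J n : ℕ) (m : Fin J → ℕ)
    (f : ∀ j : Fin J,
      WithLp 2 (EuclideanSpace ℝ (Fin n) × EuclideanSpace ℝ (Fin (m j))) → ℝ)
    (hf : ∀ j, ContDiff ℝ 2 (f j))
    (W : Fin J → Fin J → ℝ)
    (g : WithLp 2 ((PiLp 2 fun _ : Fin J => EuclideanSpace ℝ (Fin n)) ×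
          (PiLp 2 fun j : Fin J => EuclideanSpace ℝ (Fin (m j)))) → ℝ)
    (hg : ∀ z, g z = ∑ j, (f j ((WithLp.equiv 2 _).symm (z.ofLp.1 j, z.ofLp.2 j))
          + ∑ i, W j i * ‖z.ofLp.1 j - z.ofLp.1 i‖ ^ 2))
    (F : WithLp 2 (EuclideanSpace ℝ (Fin n) ×
          (PiLp 2 fun j : Fin J => EuclideanSpace ℝ (Fin (m j)))) → ℝ)
    (hF : ∀ p, F p = ∑ j, f j ((WithLp.equiv 2 _).symm (p.ofLp.1, p.ofLp.2 j)))
    (z : WithLp 2 ((PiLp 2 fun _ : Fin J => EuclideanSpace ℝ (Fin n)) ×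
          (PiLp 2 fun j : Fin J => EuclideanSpace ℝ (Fin (m j)))))
    (x : EuclideanSpace ℝ (Fin n))
    (hcons : ∀ j, z.ofLp.1 j = x)
    -- (x, y) is a strict saddle of f: critical with a negative Hessian direction
    (hFsaddle : ∃ q, fderiv ℝ (fderiv ℝ F) ((WithLp.equiv 2 _).symm (x, z.ofLp.2)) q q < 0) :
    -- then z is a strict saddle of g
    ∃ q, fderiv ℝ (fderiv ℝ g) z q q < 0 := by
  obtain ⟨q, hq⟩ := hFsaddle
  let L := consensusEmbedding (Fin J) (EuclideanSpace ℝ (Fin n))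
    (PiLp 2 fun j : Fin J => EuclideanSpace ℝ (Fin (m j)))
  have hg_eq : g = consensusObjective f W := funext hg
  have hF_eq : F = g ∘ L := funext fun p => by
    rw [hF, Function.comp_apply, hg_eq, consensusObjective_consensusEmbedding]
    rfl
  have hLz : L ((WithLp.equiv 2 _).symm (x, z.ofLp.2)) = z :=
    (WithLp.ext_iff 2).2 (Prod.ext (PiLp.ext fun j => (hcons j).symm) rfl)
  refine ⟨L q, ?_⟩
  rwa [hF_eq, fderiv_fderiv_comp_continuousLinearMap_apply
    (hg_eq ▸ contDiff_consensusObjective hf W), hLz] at hq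

/-- Let `z = (x,…,x,y)` be a consensus critical point of
`g(z) = Σ_j (f_j(x^j,y_j) + Σ_i w_{ji}‖x^j − x^i‖²)`.  If `(x,y)` is a strict saddle of
`f(x,y) = Σ_j f_j(x,y_j)` (the Hessian of `f` at `(x,y)` has a negative direction), then `z`
is a strict saddle of `g`. -/
theorem strict_saddle_of_f_gives_strict_saddle_of_g
    (J n : ℕ) (m : Fin J → ℕ)
    (f : ∀ j : Fin J,
      WithLp 2 (EuclideanSpace ℝ (Fin n) × EuclideanSpace ℝ (Fin (m j))) → ℝ)
    (hf : ∀ j, ContDiff ℝ 2 (f j))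
    (W : Fin J → Fin J → ℝ)
    (hWnonneg : ∀ i j, 0 ≤ W i j)
    (g : WithLp 2 ((PiLp 2 fun _ : Fin J => EuclideanSpace ℝ (Fin n)) ×
          (PiLp 2 fun j : Fin J => EuclideanSpace ℝ (Fin (m j)))) → ℝ)
    (hg : ∀ z, g z = ∑ j, (f j ((WithLp.equiv 2 _).symm (z.ofLp.1 j, z.ofLp.2 j))
          + ∑ i, W j i * ‖z.ofLp.1 j - z.ofLp.1 i‖ ^ 2))
    (F : WithLp 2 (EuclideanSpace ℝ (Fin n) ×
          (PiLp 2 fun j : Fin J => EuclideanSpace ℝ (Fin (m j)))) → ℝ)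
    (hF : ∀ p, F p = ∑ j, f j ((WithLp.equiv 2 _).symm (p.ofLp.1, p.ofLp.2 j)))
    (z : WithLp 2 ((PiLp 2 fun _ : Fin J => EuclideanSpace ℝ (Fin n)) ×
          (PiLp 2 fun j : Fin J => EuclideanSpace ℝ (Fin (m j)))))
    (x : EuclideanSpace ℝ (Fin n))
    (hcons : ∀ j, z.ofLp.1 j = x)
    -- z is a critical point of g
    (hcrit : fderiv ℝ g z = 0)
    -- (x, y) is a strict saddle of f: critical with a negative Hessian direction
    (hFcrit : fderiv ℝ F ((WithLp.equiv 2 _).symm (x, z.ofLp.2)) = 0)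
    (hFsaddle : ∃ q, fderiv ℝ (fderiv ℝ F) ((WithLp.equiv 2 _).symm (x, z.ofLp.2)) q q < 0) :
    -- then z is a strict saddle of g
    ∃ q, fderiv ℝ (fderiv ℝ g) z q q < 0 :=
  strict_saddle_of_f_gives_strict_saddle_of_g_general J n m f hf W g hg F hF z x hcons hFsaddle
end

section
/- Let h(U, V) = ½‖UV^T − Y‖_F². If (U, V) is a critical point of h with rank(UV^T) = r (non-degenerate), then either (U, V) is a global minimum of h or (U, V) is a strict saddle (the Hessian of h at (U,V) has a negative eigenvalue). -/
open Matrix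

/-- Squared Frobenius norm of a real matrix. -/
def frobSq {p q : ℕ} (A : Matrix (Fin p) (Fin q) ℝ) : ℝ := ∑ i, ∑ j, (A i j) ^ 2

/-- Trace inner product `⟨A, B⟩ = tr(AᵀB)` on real matrices. -/
def matInner {p q : ℕ} (A B : Matrix (Fin p) (Fin q) ℝ) : ℝ := Matrix.trace (Aᵀ * B)

/-! ### Auxiliary definitions and lemmas -/

/-- Squared euclidean norm of a vector. -/
def vsq {p : ℕ} (v : Fin p → ℝ) : ℝ := ∑ i, v i ^ 2

lemma vsq_nonneg {p : ℕ} (v : Fin p → ℝ) : 0 ≤ vsq v :=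
  Finset.sum_nonneg fun _ _ => sq_nonneg _

lemma vsq_eq_dot {p : ℕ} (v : Fin p → ℝ) : vsq v = v ⬝ᵥ v := by
  simp [vsq, dotProduct, sq]

lemma vsq_add {p : ℕ} (u w : Fin p → ℝ) :
    vsq (u + w) = vsq u + 2 * (u ⬝ᵥ w) + vsq w := by
  simp only [vsq, Pi.add_apply, dotProduct, Finset.mul_sum, ← Finset.sum_add_distrib]
  exact Finset.sum_congr rfl fun i _ => by ring

lemma matInner_eq {p q : ℕ} (A B : Matrix (Fin p) (Fin q) ℝ) :
    matInner A B = ∑ i, ∑ j, A i j * B i j := by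
  simp [matInner, Matrix.trace, Matrix.mul_apply, Matrix.diag]
  rw [Finset.sum_comm]

lemma frobSq_eq_matInner {p q : ℕ} (A : Matrix (Fin p) (Fin q) ℝ) :
    frobSq A = matInner A A := by
  simp [frobSq, matInner_eq, sq]

lemma frobSq_eq_trace {p q : ℕ} (A : Matrix (Fin p) (Fin q) ℝ) :
    frobSq A = Matrix.trace (Aᵀ * A) := frobSq_eq_matInner A

lemma frobSq_nonneg {p q : ℕ} (A : Matrix (Fin p) (Fin q) ℝ) : 0 ≤ frobSq A :=
  Finset.sum_nonneg fun _ _ => Finset.sum_nonneg fun _ _ => sq_nonneg _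

lemma frobSq_add {p q : ℕ} (A B : Matrix (Fin p) (Fin q) ℝ) :
    frobSq (A + B) = frobSq A + 2 * matInner A B + frobSq B := by
  simp only [frobSq, matInner_eq, Matrix.add_apply, ← Finset.sum_add_distrib,
    Finset.mul_sum]
  congr 1; ext i; congr 1; ext j; ring

lemma frobSq_sub {p q : ℕ} (A B : Matrix (Fin p) (Fin q) ℝ) :
    frobSq (A - B) = frobSq A - 2 * matInner A B + frobSq B := by
  simp only [frobSq, matInner_eq, Matrix.sub_apply, ← Finset.sum_add_distrib,
    ← Finset.sum_sub_distrib, Finset.mul_sum]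
  congr 1; ext i; congr 1; ext j; ring

lemma matInner_smul_right {p q : ℕ} (A B : Matrix (Fin p) (Fin q) ℝ) (c : ℝ) :
    matInner A (c • B) = c * matInner A B := by
  simp [matInner_eq, Finset.mul_sum]; ring_nf
  congr 1; ext i; congr 1; ext j; ring

lemma frobSq_smul {p q : ℕ} (A : Matrix (Fin p) (Fin q) ℝ) (c : ℝ) :
    frobSq (c • A) = c ^ 2 * frobSq A := by
  simp [frobSq, Finset.mul_sum, mul_pow]

lemma vecMulVec_mul_transpose {p q s : ℕ} (x : Fin p → ℝ) (z : Fin s → ℝ)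
    (B : Matrix (Fin q) (Fin s) ℝ) :
    vecMulVec x z * Bᵀ = vecMulVec x (B *ᵥ z) := by
  ext i j
  simp [Matrix.mul_apply, vecMulVec_apply, Matrix.mulVec, dotProduct, Finset.mul_sum]
  congr 1; ext k; ring

lemma mul_vecMulVec {p q s : ℕ} (A : Matrix (Fin p) (Fin q) ℝ) (w : Fin q → ℝ) (y : Fin s → ℝ) :
    A * vecMulVec w y = vecMulVec (A *ᵥ w) y := by
  ext i j
  simp [Matrix.mul_apply, vecMulVec_apply, Matrix.mulVec, dotProduct, Finset.sum_mul]
  congr 1; ext k; ring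

lemma vecMulVec_mul_vecMulVec {p q s : ℕ} (a : Fin p → ℝ) (b c : Fin q → ℝ) (d : Fin s → ℝ) :
    vecMulVec a b * vecMulVec c d = (b ⬝ᵥ c) • vecMulVec a d := by
  ext i j
  simp [Matrix.mul_apply, vecMulVec_apply, dotProduct, Finset.sum_mul, Finset.mul_sum]
  exact Finset.sum_congr rfl fun k _ => by ring

lemma vecMulVec_transpose' {p q : ℕ} (a : Fin p → ℝ) (b : Fin q → ℝ) :
    (vecMulVec a b)ᵀ = vecMulVec b a := by
  ext i j; simp [vecMulVec_apply, mul_comm]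

lemma frobSq_vecMulVec {p q : ℕ} (a : Fin p → ℝ) (b : Fin q → ℝ) :
    frobSq (vecMulVec a b) = vsq a * vsq b := by
  simp only [frobSq, vecMulVec_apply, mul_pow, vsq]
  rw [Finset.sum_mul_sum]

lemma matInner_vecMulVec_vecMulVec {p q : ℕ} (a c : Fin p → ℝ) (b d : Fin q → ℝ) :
    matInner (vecMulVec a b) (vecMulVec c d) = (a ⬝ᵥ c) * (b ⬝ᵥ d) := by
  rw [matInner_eq]
  simp only [vecMulVec_apply]
  rw [dotProduct, dotProduct, Finset.sum_mul_sum]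
  exact Finset.sum_congr rfl fun i _ => Finset.sum_congr rfl fun j _ => by ring

lemma matInner_vecMulVec_right {p q : ℕ} (A : Matrix (Fin p) (Fin q) ℝ) (u : Fin p → ℝ)
    (v : Fin q → ℝ) : matInner A (vecMulVec u v) = u ⬝ᵥ (A *ᵥ v) := by
  simp [matInner_eq, vecMulVec_apply, dotProduct, Matrix.mulVec, Finset.mul_sum]
  congr 1; ext i; congr 1; ext j; ring

lemma quad_neg (a b c : ℝ) (ha : 0 ≤ a) (hb : 0 ≤ b) (h : a * b < c ^ 2) :
    ∃ t s : ℝ, a * t ^ 2 + b * s ^ 2 + 2 * c * (t * s) < 0 := by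
  rcases eq_or_lt_of_le hb with hb0 | hbpos
  · have hc : c ≠ 0 := by intro h0; rw [h0] at h; nlinarith
    refine ⟨1, -(a + 1) / (2 * c), ?_⟩
    have : 2 * c * (1 * (-(a + 1) / (2 * c))) = -(a + 1) := by field_simp
    rw [this, ← hb0]
    nlinarith
  · refine ⟨1, -c / b, ?_⟩
    have hbne : b ≠ 0 := ne_of_gt hbpos
    have h1 : b * (-c / b) ^ 2 = c ^ 2 / b := by field_simp
    have h2 : 2 * c * (1 * (-c / b)) = -(2 * (c ^ 2 / b)) := by
      rw [one_mul, div_eq_mul_inv, div_eq_mul_inv]; ring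
    rw [h1, h2]
    have h3 : a < c ^ 2 / b := (lt_div_iff₀ hbpos).mpr h
    nlinarith [h3]

lemma frobSq_mul_proj {p q : ℕ} (A : Matrix (Fin p) (Fin q) ℝ) (Q : Matrix (Fin q) (Fin q) ℝ)
    (hs : Qᵀ = Q) (hi : Q * Q = Q) :
    frobSq (A * Q) = Matrix.trace (Aᵀ * A * Q) := by
  rw [frobSq_eq_trace, Matrix.transpose_mul, hs]
  have : Q * Aᵀ * (A * Q) = Q * (Aᵀ * A * Q) := by
    simp only [Matrix.mul_assoc]
  rw [this, Matrix.trace_mul_comm, Matrix.mul_assoc, hi]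

lemma frobSq_split {p q : ℕ} (A : Matrix (Fin p) (Fin q) ℝ) (Q : Matrix (Fin q) (Fin q) ℝ)
    (hs : Qᵀ = Q) (hi : Q * Q = Q) :
    frobSq A = frobSq (A * Q) + frobSq (A * (1 - Q)) := by
  have hs' : (1 - Q)ᵀ = 1 - Q := by rw [Matrix.transpose_sub, Matrix.transpose_one, hs]
  have hi' : (1 - Q) * (1 - Q) = 1 - Q := by
    simp [Matrix.mul_sub, Matrix.sub_mul, hi]
  rw [frobSq_mul_proj A Q hs hi, frobSq_mul_proj A (1 - Q) hs' hi',
    Matrix.mul_sub, Matrix.mul_one, Matrix.trace_sub, frobSq_eq_trace]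
  ring

lemma frobSq_proj_mul_proj {q : ℕ} (A B : Matrix (Fin q) (Fin q) ℝ)
    (hsA : Aᵀ = A) (hiA : A * A = A) (hsB : Bᵀ = B) (hiB : B * B = B) :
    frobSq (A * B) = Matrix.trace (A * B) := by
  rw [frobSq_eq_trace, Matrix.transpose_mul, hsA, hsB]
  have h1 : B * A * (A * B) = B * (A * B) := by
    rw [Matrix.mul_assoc B A (A * B), ← Matrix.mul_assoc A A B, hiA]
  rw [h1, Matrix.trace_mul_comm, Matrix.mul_assoc, hiB]

lemma frobSq_cols {p q : ℕ} (A : Matrix (Fin p) (Fin q) ℝ) :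
    frobSq A = ∑ j, vsq (fun i => A i j) := by
  rw [frobSq, Finset.sum_comm]; rfl

lemma mul_col {p q s : ℕ} (A : Matrix (Fin p) (Fin q) ℝ) (B : Matrix (Fin q) (Fin s) ℝ)
    (j : Fin s) : (fun i => (A * B) i j) = A *ᵥ (fun k => B k j) := by
  ext i; simp [Matrix.mul_apply, Matrix.mulVec, dotProduct]

lemma frobSq_mul_le_of_colbound {p q s : ℕ} (A : Matrix (Fin p) (Fin q) ℝ)
    (B : Matrix (Fin q) (Fin s) ℝ) (c : ℝ)
    (h : ∀ v : Fin q → ℝ, vsq (A *ᵥ v) ≤ c * vsq v) :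
    frobSq (A * B) ≤ c * frobSq B := by
  rw [frobSq_cols, frobSq_cols B, Finset.mul_sum]
  refine Finset.sum_le_sum fun j _ => ?_
  rw [mul_col]
  exact h _

lemma dot_mulVec_symm {p : ℕ} (A : Matrix (Fin p) (Fin p) ℝ) (hA : Aᵀ = A)
    (u w : Fin p → ℝ) : u ⬝ᵥ (A *ᵥ w) = (A *ᵥ u) ⬝ᵥ w := by
  rw [Matrix.dotProduct_mulVec, ← hA, Matrix.vecMul_transpose, hA]

lemma euclid_inner_eq_dot {p : ℕ} (x y : EuclideanSpace ℝ (Fin p)) :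
    (inner ℝ x y : ℝ) = (x : Fin p → ℝ) ⬝ᵥ (y : Fin p → ℝ) := by
  simp [PiLp.inner_apply, RCLike.inner_apply, dotProduct, mul_comm]

lemma proj_exists {mm r : ℕ} (V' : Matrix (Fin mm) (Fin r) ℝ) :
    ∃ P : Matrix (Fin mm) (Fin mm) ℝ,
      Pᵀ = P ∧ P * P = P ∧ V'ᵀ * P = V'ᵀ ∧ P.trace ≤ (r : ℝ) := by
  classical
  set K : Submodule ℝ (EuclideanSpace ℝ (Fin mm)) :=
    Submodule.span ℝ (Set.range fun j => (WithLp.toLp 2 (fun i => V' i j) : EuclideanSpace ℝ (Fin mm)))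
    with hK
  let b := stdOrthonormalBasis ℝ K
  set k := Module.finrank ℝ K with hk
  let v : Fin k → (Fin mm → ℝ) := fun i => ((b i : K) : EuclideanSpace ℝ (Fin mm))
  have ho : ∀ i j, v i ⬝ᵥ v j = if i = j then (1 : ℝ) else 0 := by
    intro i j
    have := (orthonormal_iff_ite (𝕜 := ℝ)).mp b.orthonormal i j
    rw [Submodule.coe_inner] at this
    rw [← euclid_inner_eq_dot, this]
  set P : Matrix (Fin mm) (Fin mm) ℝ := ∑ i, vecMulVec (v i) (v i) with hP
  have hPsymm : Pᵀ = P := by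
    rw [hP, Matrix.transpose_sum]
    exact Finset.sum_congr rfl fun i _ => by ext a c; simp [vecMulVec_apply, mul_comm]
  have hPidem : P * P = P := by
    rw [hP, Finset.sum_mul_sum]
    have : ∀ i j, vecMulVec (v i) (v i) * vecMulVec (v j) (v j)
        = (if i = j then (1:ℝ) else 0) • vecMulVec (v i) (v j) := by
      intro i j; rw [_root_.vecMulVec_mul_vecMulVec, ho]
    simp_rw [this]
    simp [Finset.sum_ite_eq, ite_smul]
  have hmv : ∀ u : Fin mm → ℝ, P *ᵥ u = ∑ i, (v i ⬝ᵥ u) • v i := by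
    intro u
    funext l
    rw [hP]
    simp only [Matrix.mulVec, dotProduct, Matrix.sum_apply, vecMulVec_apply,
      Finset.sum_apply, Finset.sum_mul, Pi.smul_apply, smul_eq_mul]
    rw [Finset.sum_comm]
    exact Finset.sum_congr rfl fun i _ => Finset.sum_congr rfl fun kk _ => by ring
  have hfix : ∀ u : EuclideanSpace ℝ (Fin mm), u ∈ K → P *ᵥ (u : Fin mm → ℝ) = u := by
    intro u hu
    have hrep := b.sum_repr ⟨u, hu⟩
    have hco : ∀ i, b.repr ⟨u, hu⟩ i = v i ⬝ᵥ u := by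
      intro i
      rw [b.repr_apply_apply, Submodule.coe_inner, euclid_inner_eq_dot]
    have hcoe := congrArg (Submodule.subtype K) hrep
    simp only [map_sum, Submodule.subtype_apply, Submodule.coe_smul] at hcoe
    rw [hmv u]
    calc ∑ i, (v i ⬝ᵥ u) • v i = ∑ i, b.repr ⟨u, hu⟩ i • v i := by
          exact Finset.sum_congr rfl fun i _ => by rw [hco]
      _ = u := by
        have := congrArg WithLp.ofLp hcoe
        simpa [v] using this
  have hcolmem : ∀ j, (WithLp.toLp 2 (fun i => V' i j) : EuclideanSpace ℝ (Fin mm)) ∈ K :=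
    fun j => Submodule.subset_span ⟨j, rfl⟩
  refine ⟨P, hPsymm, hPidem, ?_, ?_⟩
  · ext j l
    have := congrFun (hfix _ (hcolmem j)) l
    simp only [Matrix.mulVec, dotProduct] at this
    simp only [Matrix.mul_apply, Matrix.transpose_apply]
    rw [← this]
    exact Finset.sum_congr rfl fun kk _ => by
      rw [← congrFun (congrFun hPsymm l) kk]; simp [Matrix.transpose_apply]; ring
  · have htr : P.trace = (k : ℝ) := by
      rw [hP, Matrix.trace_sum]
      have : ∀ i, (vecMulVec (v i) (v i)).trace = (1 : ℝ) := by
        intro i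
        have hdot := ho i i
        simp only [if_pos rfl] at hdot
        rw [Matrix.trace]
        simpa [Matrix.diag, vecMulVec_apply, dotProduct] using hdot
      simp [this]
    rw [htr]
    have hkr : k ≤ r := by
      have := finrank_range_le_card (R := ℝ)
        (fun j => (WithLp.toLp 2 (fun i => V' i j) : EuclideanSpace ℝ (Fin mm)))
      simpa [Set.finrank, ← hK, Fintype.card_fin] using this
    exact_mod_cast hkr

lemma norm_sq_eq_vsq {p : ℕ} (x : EuclideanSpace ℝ (Fin p)) :
    ‖x‖ ^ 2 = vsq (x : Fin p → ℝ) := by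
  rw [EuclideanSpace.norm_eq, Real.sq_sqrt (by positivity)]
  simp [vsq, Real.norm_eq_abs, sq_abs]

lemma gram_isUnit {mm r : ℕ} (V : Matrix (Fin mm) (Fin r) ℝ) (h : V.rank = r) :
    IsUnit (Vᵀ * V) := by
  have h1 : (Vᵀ * V).rank = r := by rw [Matrix.rank_transpose_mul_self, h]
  have h2 : LinearMap.range (Vᵀ * V).mulVecLin = ⊤ := by
    apply Submodule.eq_top_of_finrank_eq
    rw [show Module.finrank ℝ ↥(LinearMap.range (Vᵀ * V).mulVecLin) = (Vᵀ * V).rank from rfl, h1,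
      Module.finrank_fin_fun]
  have h3 : Function.Surjective (Vᵀ * V).mulVec := by
    have := LinearMap.range_eq_top.mp h2
    exact this
  exact Matrix.mulVec_surjective_iff_isUnit.mp h3

lemma opnorm_transfer {n mm : ℕ} (E : Matrix (Fin n) (Fin mm) ℝ) :
    ∃ c : ℝ, 0 ≤ c ∧ (∀ y, vsq (E *ᵥ y) ≤ c * vsq y) ∧
      (∀ S T : ℝ, 0 ≤ S → 0 ≤ T → (∀ y, vsq (E *ᵥ y) * T ≤ vsq y * S) → c * T ≤ S) := by
  classical
  set f := LinearMap.toContinuousLinearMap (Matrix.toEuclideanLin E) with hf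
  have hfapp : ∀ y : Fin mm → ℝ,
      f ((WithLp.equiv 2 (Fin mm → ℝ)).symm y) = (WithLp.equiv 2 (Fin n → ℝ)).symm (E *ᵥ y) := by
    intro y
    rw [hf, LinearMap.coe_toContinuousLinearMap']
    exact Matrix.toEuclideanLin_apply_piLp_toLp E y
  have hvs : ∀ (p : ℕ) (w : Fin p → ℝ),
      ‖(WithLp.equiv 2 (Fin p → ℝ)).symm w‖ ^ 2 = vsq w := by
    intro p w
    rw [norm_sq_eq_vsq]
    rfl
  refine ⟨‖f‖ ^ 2, sq_nonneg _, ?_, ?_⟩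
  · intro y
    have h1 := f.le_opNorm ((WithLp.equiv 2 (Fin mm → ℝ)).symm y)
    have h2 : ‖f ((WithLp.equiv 2 (Fin mm → ℝ)).symm y)‖ ^ 2
        ≤ (‖f‖ * ‖(WithLp.equiv 2 (Fin mm → ℝ)).symm y‖) ^ 2 :=
      pow_le_pow_left₀ (norm_nonneg _) h1 2
    rw [hfapp, hvs, mul_pow] at h2
    calc vsq (E *ᵥ y) ≤ ‖f‖ ^ 2 * ‖(WithLp.equiv 2 (Fin mm → ℝ)).symm y‖ ^ 2 := h2
      _ = ‖f‖ ^ 2 * vsq y := by rw [hvs]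
  · intro S T hS hT hyp
    rcases eq_or_lt_of_le hT with hT0 | hTpos
    · rw [← hT0, mul_zero]; exact hS
    · have hb : ‖f‖ ≤ Real.sqrt (S / T) := by
        apply f.opNorm_le_bound (Real.sqrt_nonneg _)
        intro x
        have hx := hyp ((WithLp.equiv 2 (Fin mm → ℝ)) x)
        have hxx : (WithLp.equiv 2 (Fin mm → ℝ)).symm ((WithLp.equiv 2 (Fin mm → ℝ)) x) = x :=
          (WithLp.equiv 2 (Fin mm → ℝ)).symm_apply_apply x
        have h1 : ‖f x‖ ^ 2 * T ≤ ‖x‖ ^ 2 * S := by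
          have e0 := hfapp ((WithLp.equiv 2 (Fin mm → ℝ)) x)
          rw [hxx] at e0
          have e1 : ‖f x‖ ^ 2 = vsq (E *ᵥ (WithLp.equiv 2 (Fin mm → ℝ)) x) := by
            rw [e0, hvs]
          have e2 : ‖x‖ ^ 2 = vsq ((WithLp.equiv 2 (Fin mm → ℝ)) x) := by
            rw [← hvs _ ((WithLp.equiv 2 (Fin mm → ℝ)) x), hxx]
          rw [e1, e2]; exact hx
        have h2 : ‖f x‖ ^ 2 ≤ S / T * ‖x‖ ^ 2 := by
          rw [div_mul_eq_mul_div, le_div_iff₀ hTpos]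
          calc ‖f x‖ ^ 2 * T ≤ ‖x‖ ^ 2 * S := h1
            _ = S * ‖x‖ ^ 2 := by ring
        calc ‖f x‖ = Real.sqrt (‖f x‖ ^ 2) := (Real.sqrt_sq (norm_nonneg _)).symm
          _ ≤ Real.sqrt (S / T * ‖x‖ ^ 2) := Real.sqrt_le_sqrt h2
          _ = Real.sqrt (S / T) * ‖x‖ := by
              rw [Real.sqrt_mul (by positivity), Real.sqrt_sq (norm_nonneg _)]
      have hc : ‖f‖ ^ 2 ≤ S / T := by
        have := pow_le_pow_left₀ (norm_nonneg _) hb 2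
        rwa [Real.sq_sqrt (by positivity)] at this
      calc ‖f‖ ^ 2 * T ≤ S / T * T := mul_le_mul_of_nonneg_right hc hT
        _ = S := by field_simp

lemma matInner_smul_left {p q : ℕ} (A B : Matrix (Fin p) (Fin q) ℝ) (c : ℝ) :
    matInner (c • A) B = c * matInner A B := by
  simp [matInner_eq, Finset.mul_sum]
  congr 1; ext i; congr 1; ext j; ring


set_option maxHeartbeats 1600000 in
/-- Let `h(U,V) = ½‖UVᵀ − Y‖_F²`.  If `(U,V)` is a critical point of `h`
with `rank(UVᵀ) = r` (non-degenerate), then either `(U,V)` is a global minimum of `h`, or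
`(U,V)` is a strict saddle: there is a direction `Δ = (Δ_U, Δ_V)` in which the Hessian
quadratic form `‖Δ_U Vᵀ + U Δ_Vᵀ‖_F² + 2⟨UVᵀ − Y, Δ_U Δ_Vᵀ⟩` is negative. -/
theorem nondegenerate_critical_points_min_or_strict_saddle
    (n mm r : ℕ) (Y : Matrix (Fin n) (Fin mm) ℝ)
    (U : Matrix (Fin n) (Fin r) ℝ) (V : Matrix (Fin mm) (Fin r) ℝ)
    -- (U,V) is a critical point of h
    (hcrit1 : (U * Vᵀ - Y) * V = 0)
    (hcrit2 : (U * Vᵀ - Y)ᵀ * U = 0)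
    -- non-degeneracy
    (hrank : (U * Vᵀ).rank = r) :
    -- global minimum of h
    (∀ (U' : Matrix (Fin n) (Fin r) ℝ) (V' : Matrix (Fin mm) (Fin r) ℝ),
      (1/2 : ℝ) * frobSq (U * Vᵀ - Y) ≤ (1/2 : ℝ) * frobSq (U' * V'ᵀ - Y)) ∨
    -- or strict saddle
    (∃ (DU : Matrix (Fin n) (Fin r) ℝ) (DV : Matrix (Fin mm) (Fin r) ℝ),
      frobSq (DU * Vᵀ + U * DVᵀ) + 2 * matInner (U * Vᵀ - Y) (DU * DVᵀ) < 0) := by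
  classical
  set E : Matrix (Fin n) (Fin mm) ℝ := U * Vᵀ - Y with hE
  by_cases hsad : ∃ (y : Fin mm → ℝ) (z w : Fin r → ℝ), Vᵀ *ᵥ y = 0 ∧
      vsq y * vsq (V *ᵥ z) * vsq (U *ᵥ w) < (z ⬝ᵥ w) ^ 2 * vsq (E *ᵥ y)
  · right
    obtain ⟨y, z, w, hyV, hlt⟩ := hsad
    set x : Fin n → ℝ := E *ᵥ y with hx
    have hUtE : Uᵀ * E = 0 := by
      have := congrArg Matrix.transpose hcrit2
      rwa [Matrix.transpose_mul, Matrix.transpose_transpose, Matrix.transpose_zero] at this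
    have hxU : x ᵥ* U = 0 := by
      rw [hx, ← Matrix.mulVec_transpose, Matrix.mulVec_mulVec, hUtE, Matrix.zero_mulVec]
    have hx0 : 0 < vsq x := by
      have h1 : 0 ≤ vsq y * vsq (V *ᵥ z) * vsq (U *ᵥ w) :=
        mul_nonneg (mul_nonneg (vsq_nonneg _) (vsq_nonneg _)) (vsq_nonneg _)
      nlinarith [sq_nonneg (z ⬝ᵥ w), vsq_nonneg x, hlt]
    obtain ⟨t, s, hts⟩ := quad_neg (vsq x * vsq (V *ᵥ z)) (vsq (U *ᵥ w) * vsq y)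
      ((z ⬝ᵥ w) * vsq x)
      (mul_nonneg (vsq_nonneg _) (vsq_nonneg _)) (mul_nonneg (vsq_nonneg _) (vsq_nonneg _))
      (by nlinarith [mul_lt_mul_of_pos_left hlt hx0])
    refine ⟨t • vecMulVec x z, s • vecMulVec y w, ?_⟩
    have e1 : (t • vecMulVec x z) * Vᵀ = t • vecMulVec x (V *ᵥ z) := by
      rw [Matrix.smul_mul, vecMulVec_mul_transpose]
    have e2 : U * (s • vecMulVec y w)ᵀ = s • vecMulVec (U *ᵥ w) y := by
      rw [Matrix.transpose_smul, vecMulVec_transpose', Matrix.mul_smul, mul_vecMulVec]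
    have e3 : (t • vecMulVec x z) * (s • vecMulVec y w)ᵀ
        = (t * (s * (z ⬝ᵥ w))) • vecMulVec x y := by
      rw [Matrix.transpose_smul, vecMulVec_transpose', Matrix.smul_mul, Matrix.mul_smul,
        vecMulVec_mul_vecMulVec, smul_smul, smul_smul, mul_assoc]
    have e4 : matInner (vecMulVec x (V *ᵥ z)) (vecMulVec (U *ᵥ w) y) = 0 := by
      rw [matInner_vecMulVec_vecMulVec, Matrix.dotProduct_mulVec, hxU,
        zero_dotProduct, zero_mul]
    have e5 : x ⬝ᵥ (E *ᵥ y) = vsq x := by rw [← hx, vsq_eq_dot]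
    rw [e1, e2, frobSq_add, e3, frobSq_smul, frobSq_smul, frobSq_vecMulVec, frobSq_vecMulVec,
      matInner_smul_left, matInner_smul_right, e4, matInner_smul_right,
      matInner_vecMulVec_right, e5]
    ring_nf
    ring_nf at hts
    linarith [hts]
  · left
    intro U' V'
    push_neg at hsad
    have hVr : V.rank = r := by
      refine le_antisymm (Matrix.rank_le_width V) ?_
      calc r = (U * Vᵀ).rank := hrank.symm
        _ ≤ Vᵀ.rank := Matrix.rank_mul_le_right U Vᵀ
        _ = V.rank := Matrix.rank_transpose V
    set G : Matrix (Fin r) (Fin r) ℝ := Vᵀ * V with hG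
    have hGu : IsUnit G := gram_isUnit V hVr
    have hGdet : IsUnit G.det := (Matrix.isUnit_iff_isUnit_det G).mp hGu
    have hGG : G * G⁻¹ = 1 := Matrix.mul_nonsing_inv G hGdet
    have hGsymm : Gᵀ = G := by rw [hG, Matrix.transpose_mul, Matrix.transpose_transpose]
    have hGis : G⁻¹ᵀ = G⁻¹ := by rw [Matrix.transpose_nonsing_inv, hGsymm]
    set P2 : Matrix (Fin mm) (Fin mm) ℝ := V * G⁻¹ * Vᵀ with hP2
    have hVtP2 : Vᵀ * P2 = Vᵀ := by
      rw [hP2, ← Matrix.mul_assoc, ← Matrix.mul_assoc, ← hG, hGG, Matrix.one_mul]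
    have hP2symm : P2ᵀ = P2 := by
      rw [hP2, Matrix.transpose_mul, Matrix.transpose_mul, Matrix.transpose_transpose, hGis,
        Matrix.mul_assoc]
    have hP2idem : P2 * P2 = P2 := by
      conv_lhs => rw [hP2]
      rw [Matrix.mul_assoc, hVtP2, ← hP2]
    have hMP2 : (U * Vᵀ) * P2 = U * Vᵀ := by rw [Matrix.mul_assoc, hVtP2]
    have hEV : E * V = 0 := hcrit1
    have hEP2 : E * P2 = 0 := by
      rw [hP2, ← Matrix.mul_assoc, ← Matrix.mul_assoc, hEV, Matrix.zero_mul, Matrix.zero_mul]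
    have htrP2 : P2.trace = (r : ℝ) := by
      rw [hP2, Matrix.trace_mul_comm, ← Matrix.mul_assoc, ← hG, hGG, Matrix.trace_one]
      simp
    have hkey : ∀ (y : Fin mm → ℝ) (α : Fin r → ℝ),
        vsq (E *ᵥ y) * vsq (V *ᵥ α) ≤ vsq y * vsq ((U * Vᵀ) *ᵥ (V *ᵥ α)) := by
      intro y α
      set y' : Fin mm → ℝ := y - P2 *ᵥ y with hy'
      have hy'V : Vᵀ *ᵥ y' = 0 := by
        rw [hy', Matrix.mulVec_sub, Matrix.mulVec_mulVec, hVtP2, sub_self]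
      have hEy' : E *ᵥ y' = E *ᵥ y := by
        rw [hy', Matrix.mulVec_sub, Matrix.mulVec_mulVec, hEP2, Matrix.zero_mulVec, sub_zero]
      have hy'le : vsq y' ≤ vsq y := by
        have hP2y' : P2 *ᵥ y' = 0 := by
          rw [hy', Matrix.mulVec_sub, Matrix.mulVec_mulVec, hP2idem, sub_self]
        have hdot : y' ⬝ᵥ (P2 *ᵥ y) = 0 := by
          rw [dot_mulVec_symm P2 hP2symm, hP2y', zero_dotProduct]
        have hsum : y' + P2 *ᵥ y = y := by rw [hy']; exact sub_add_cancel y (P2 *ᵥ y)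
        have hexp : vsq y = vsq y' + 2 * (y' ⬝ᵥ (P2 *ᵥ y)) + vsq (P2 *ᵥ y) := by
          conv_lhs => rw [← hsum]
          exact vsq_add _ _
        rw [hexp, hdot]
        nlinarith [vsq_nonneg (P2 *ᵥ y)]
      have happ := hsad y' α (G *ᵥ α) hy'V
      have hzw : α ⬝ᵥ (G *ᵥ α) = vsq (V *ᵥ α) := by
        rw [hG, ← Matrix.mulVec_mulVec, Matrix.dotProduct_mulVec, Matrix.vecMul_transpose,
          vsq_eq_dot]
      have hUw : U *ᵥ (G *ᵥ α) = (U * Vᵀ) *ᵥ (V *ᵥ α) := by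
        rw [hG, Matrix.mulVec_mulVec, Matrix.mulVec_mulVec, ← Matrix.mul_assoc]
      rw [hzw, hEy', hUw] at happ
      rcases eq_or_lt_of_le (vsq_nonneg (V *ᵥ α)) with h0 | hpos
      · rw [← h0, mul_zero]
        exact mul_nonneg (vsq_nonneg _) (vsq_nonneg _)
      · have hstep : vsq y' * vsq (V *ᵥ α) * vsq ((U * Vᵀ) *ᵥ (V *ᵥ α))
            ≤ vsq y * vsq (V *ᵥ α) * vsq ((U * Vᵀ) *ᵥ (V *ᵥ α)) :=
          mul_le_mul_of_nonneg_right
            (mul_le_mul_of_nonneg_right hy'le (le_of_lt hpos)) (vsq_nonneg _)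
        have h2 := le_trans happ hstep
        have h3 : vsq (V *ᵥ α) * (vsq (E *ᵥ y) * vsq (V *ᵥ α))
            ≤ vsq (V *ᵥ α) * (vsq y * vsq ((U * Vᵀ) *ᵥ (V *ᵥ α))) := by
          ring_nf at h2 ⊢
          linarith [h2]
        exact le_of_mul_le_mul_left h3 hpos
    obtain ⟨P', hP'symm, hP'idem, hVt'P', htrP'⟩ := proj_exists V'
    obtain ⟨c, hc0, hcbound, hcopt⟩ := opnorm_transfer E
    have hsplitD : frobSq (U' * V'ᵀ - Y)
        = frobSq ((U' * V'ᵀ - Y) * P') + frobSq ((U' * V'ᵀ - Y) * (1 - P')) :=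
      frobSq_split _ P' hP'symm hP'idem
    have hZQ : (U' * V'ᵀ) * (1 - P') = 0 := by
      rw [Matrix.mul_sub, Matrix.mul_one, Matrix.mul_assoc, hVt'P', sub_self]
    have hYE : Y = U * Vᵀ - E := by rw [hE, sub_sub_cancel]
    have hDQ : (U' * V'ᵀ - Y) * (1 - P') = E * (1 - P') - (U * Vᵀ) * (1 - P') := by
      conv_lhs => rw [hYE]
      rw [Matrix.sub_mul, Matrix.sub_mul, hZQ]
      abel
    have hcross : frobSq (E * (1 - P') - (U * Vᵀ) * (1 - P'))
        = frobSq (E * (1 - P')) + frobSq ((U * Vᵀ) * (1 - P')) := by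
      rw [frobSq_sub]
      have hEtM : Eᵀ * (U * Vᵀ) = 0 := by rw [← Matrix.mul_assoc, hcrit2, Matrix.zero_mul]
      have hz : matInner (E * (1 - P')) ((U * Vᵀ) * (1 - P')) = 0 := by
        show Matrix.trace ((E * (1 - P'))ᵀ * ((U * Vᵀ) * (1 - P'))) = 0
        rw [Matrix.transpose_mul]
        have : (1 - P')ᵀ * Eᵀ * ((U * Vᵀ) * (1 - P'))
            = (1 - P')ᵀ * (Eᵀ * (U * Vᵀ) * (1 - P')) := by
          simp only [Matrix.mul_assoc]
        rw [this, hEtM, Matrix.zero_mul, Matrix.mul_zero, Matrix.trace_zero]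
      rw [hz]; ring
    have hsplitE : frobSq E = frobSq (E * P') + frobSq (E * (1 - P')) :=
      frobSq_split E P' hP'symm hP'idem
    have hEP' : E * P' = E * ((1 - P2) * P') := by
      rw [← Matrix.mul_assoc, Matrix.mul_sub, Matrix.mul_one, hEP2, sub_zero]
    have hb1 : frobSq (E * P') ≤ c * frobSq ((1 - P2) * P') := by
      rw [hEP']; exact frobSq_mul_le_of_colbound E _ c hcbound
    have h1mP2symm : (1 - P2)ᵀ = 1 - P2 := by
      rw [Matrix.transpose_sub, Matrix.transpose_one, hP2symm]
    have h1mP2idem : (1 - P2) * (1 - P2) = 1 - P2 := by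
      simp [Matrix.mul_sub, Matrix.sub_mul, hP2idem]
    have h1mP'symm : (1 - P')ᵀ = 1 - P' := by
      rw [Matrix.transpose_sub, Matrix.transpose_one, hP'symm]
    have h1mP'idem : (1 - P') * (1 - P') = 1 - P' := by
      simp [Matrix.mul_sub, Matrix.sub_mul, hP'idem]
    have hb2 : frobSq ((1 - P2) * P') ≤ frobSq (P2 * (1 - P')) := by
      rw [frobSq_proj_mul_proj _ _ h1mP2symm h1mP2idem hP'symm hP'idem,
        frobSq_proj_mul_proj _ _ hP2symm hP2idem h1mP'symm h1mP'idem,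
        Matrix.sub_mul, Matrix.one_mul, Matrix.mul_sub, Matrix.mul_one,
        Matrix.trace_sub, Matrix.trace_sub]
      linarith [htrP', htrP2.le, htrP2.ge]
    have hb3 : c * frobSq (P2 * (1 - P')) ≤ frobSq ((U * Vᵀ) * (1 - P')) := by
      apply hcopt _ _ (frobSq_nonneg _) (frobSq_nonneg _)
      intro y
      rw [frobSq_cols (P2 * (1 - P')), frobSq_cols ((U * Vᵀ) * (1 - P')),
        Finset.mul_sum, Finset.mul_sum]
      refine Finset.sum_le_sum fun j _ => ?_
      rw [mul_col, mul_col]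
      set q : Fin mm → ℝ := fun k => (1 - P') k j with hq
      have e1 : P2 *ᵥ q = V *ᵥ ((G⁻¹ * Vᵀ) *ᵥ q) := by
        rw [Matrix.mulVec_mulVec, ← Matrix.mul_assoc, ← hP2]
      have e2 : (U * Vᵀ) *ᵥ q = (U * Vᵀ) *ᵥ (V *ᵥ ((G⁻¹ * Vᵀ) *ᵥ q)) := by
        conv_lhs => rw [← hMP2, ← Matrix.mulVec_mulVec, e1]
      rw [e1, e2]
      exact hkey y _
    have hfinal : frobSq E ≤ frobSq (U' * V'ᵀ - Y) := by
      have hD2 : frobSq ((U' * V'ᵀ - Y) * (1 - P'))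
          = frobSq (E * (1 - P')) + frobSq ((U * Vᵀ) * (1 - P')) := by rw [hDQ, hcross]
      have hmid : frobSq (E * P') ≤ frobSq ((U * Vᵀ) * (1 - P')) :=
        le_trans hb1 (le_trans (mul_le_mul_of_nonneg_left hb2 hc0) hb3)
      calc frobSq E = frobSq (E * P') + frobSq (E * (1 - P')) := hsplitE
        _ ≤ frobSq ((U * Vᵀ) * (1 - P')) + frobSq (E * (1 - P')) := by linarith
        _ = frobSq ((U' * V'ᵀ - Y) * (1 - P')) := by rw [hD2]; ring
        _ ≤ frobSq ((U' * V'ᵀ - Y) * P') + frobSq ((U' * V'ᵀ - Y) * (1 - P')) := by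
              linarith [frobSq_nonneg ((U' * V'ᵀ - Y) * P')]
        _ = frobSq (U' * V'ᵀ - Y) := hsplitD.symm
    linarith [hfinal]
end

section
/- Let (U, V) be a critical point of h(U, V) = ½‖UV^T − Y‖_F² with rank(UV^T) = r, and let UV^T = PΣQ^T be a reduced SVD. Define D = (U^T U)^{-1} U^T P Σ^{1/2} and G = (V^T V)^{-1} V^T Q Σ^{1/2}. Then DG^T = I, the pair Ũ = UD, Ṽ = VG satisfies Ũ Ṽ^T = UV^T and Ũ^T Ũ = Ṽ^T Ṽ, and (Ũ, Ṽ) is also a critical point of h. -/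
/-!
Since `UVᵀ = PΣQᵀ` with `QᵀQ = I` and `Σ` invertible, `P = U (VᵀQΣ⁻¹)` lies in the column space
of `U`, which the projector `U(UᵀU)⁻¹Uᵀ` fixes; hence `UD = PΣ^{1/2}` and likewise
`VG = QΣ^{1/2}`. Then `ŨṼᵀ = PΣQᵀ = UVᵀ` and `ŨᵀŨ = Σ = ṼᵀṼ`. The residual `UVᵀ - Y` is therefore
unchanged, so the critical-point equations for `(Ũ, Ṽ)` are those for `(U, V)` multiplied on the
right by `G` and `D`. Finally `DGᵀ = I` because `U(DGᵀ)Vᵀ = UVᵀ` and `U`, `Vᵀ` are cancellable.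
-/

open Matrix

namespace Matrix

variable {m n r k : Type*} [Fintype m] [Fintype n] [Fintype r] [DecidableEq r] [Fintype k]
  [DecidableEq k] {R : Type*} [CommRing R]

omit [Fintype k] [DecidableEq k] in
theorem mul_inv_transpose_mul_mul_mul_self {A : Matrix m r R} (hA : IsUnit (Aᵀ * A).det)
    (B : Matrix r k R) : A * ((Aᵀ * A)⁻¹ * Aᵀ * (A * B)) = A * B := by
  calc A * ((Aᵀ * A)⁻¹ * Aᵀ * (A * B)) = A * ((Aᵀ * A)⁻¹ * (Aᵀ * A) * B) := by
        simp only [Matrix.mul_assoc]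
    _ = A * B := by rw [nonsing_inv_mul _ hA, Matrix.one_mul]

omit [Fintype m] [DecidableEq r] in
theorem eq_mul_of_mul_transpose_eq {U : Matrix m r R} {V : Matrix n r R} {P : Matrix m k R}
    {S : Matrix k k R} {Q : Matrix n k R} (hQ : Qᵀ * Q = 1) (hS : IsUnit S.det)
    (h : U * Vᵀ = P * S * Qᵀ) : P = U * (Vᵀ * Q * S⁻¹) := by
  calc P = P * S * (Qᵀ * Q) * S⁻¹ := by
        rw [hQ, Matrix.mul_one, Matrix.mul_assoc, mul_nonsing_inv _ hS, Matrix.mul_one]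
    _ = U * (Vᵀ * Q * S⁻¹) := by simp only [← Matrix.mul_assoc, ← h]

theorem mul_inv_transpose_mul_mul_of_mul_transpose_eq {U : Matrix m r R} {V : Matrix n r R}
    {P : Matrix m k R} {S : Matrix k k R} {Q : Matrix n k R} (hU : IsUnit (Uᵀ * U).det)
    (hQ : Qᵀ * Q = 1) (hS : IsUnit S.det) (h : U * Vᵀ = P * S * Qᵀ) :
    U * ((Uᵀ * U)⁻¹ * Uᵀ * P) = P := by
  rw [eq_mul_of_mul_transpose_eq hQ hS h, mul_inv_transpose_mul_mul_mul_self hU]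

theorem eq_of_mul_mul_transpose_eq {A : Matrix m r R} {B : Matrix n r R}
    (hA : IsUnit (Aᵀ * A).det) (hB : IsUnit (Bᵀ * B).det) {X Y : Matrix r r R}
    (h : A * X * Bᵀ = A * Y * Bᵀ) : X = Y := by
  have hcancel : ∀ Z : Matrix r r R, (Aᵀ * A)⁻¹ * Aᵀ * (A * Z * Bᵀ) * (B * (Bᵀ * B)⁻¹) = Z := by
    intro Z
    calc (Aᵀ * A)⁻¹ * Aᵀ * (A * Z * Bᵀ) * (B * (Bᵀ * B)⁻¹)
        = (Aᵀ * A)⁻¹ * (Aᵀ * A) * Z * ((Bᵀ * B) * (Bᵀ * B)⁻¹) := by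
          simp only [Matrix.mul_assoc]
      _ = Z := by rw [nonsing_inv_mul _ hA, mul_nonsing_inv _ hB, Matrix.one_mul, Matrix.mul_one]
  rw [← hcancel X, h, hcancel]

theorem diagonal_sqrt_mul_self {σ : k → ℝ} (hσ : ∀ i, 0 ≤ σ i) :
    diagonal (fun i => √(σ i)) * diagonal (fun i => √(σ i)) = diagonal σ := by
  simp only [diagonal_mul_diagonal, Real.mul_self_sqrt (hσ _)]

theorem isUnit_det_diagonal_of_pos {σ : k → ℝ} (hσ : ∀ i, 0 < σ i) :
    IsUnit (diagonal σ).det := by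
  rw [det_diagonal]
  exact (Finset.prod_pos fun i _ => hσ i).ne'.isUnit

end Matrix

/-- Let `(U,V)` be a critical point of `h(U,V) = ½‖UVᵀ − Y‖_F²` with
`rank(UVᵀ) = r`, and let `UVᵀ = PΣQᵀ` be a reduced SVD (with `Σ` diagonal with positive
entries and `P, Q` with orthonormal columns).  Define `D = (UᵀU)⁻¹UᵀPΣ^{1/2}` and
`G = (VᵀV)⁻¹VᵀQΣ^{1/2}`.  Then `DGᵀ = I`, the pair `Ũ = UD`, `Ṽ = VG` satisfies
`ŨṼᵀ = UVᵀ` and `ŨᵀŨ = ṼᵀṼ`, and `(Ũ,Ṽ)` is also a critical point of `h`. -/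
theorem balanced_factorization_from_critical_point
    (n mm r : ℕ) (Y : Matrix (Fin n) (Fin mm) ℝ)
    (U : Matrix (Fin n) (Fin r) ℝ) (V : Matrix (Fin mm) (Fin r) ℝ)
    -- full column rank, so UᵀU and VᵀV are invertible
    (hU : IsUnit (Uᵀ * U).det) (hV : IsUnit (Vᵀ * V).det)
    -- critical point equations
    (hcrit1 : (U * Vᵀ - Y) * V = 0)
    (hcrit2 : (U * Vᵀ - Y)ᵀ * U = 0)
    -- reduced SVD of UVᵀ
    (P : Matrix (Fin n) (Fin r) ℝ) (Q : Matrix (Fin mm) (Fin r) ℝ) (σ : Fin r → ℝ)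
    (hP : Pᵀ * P = 1) (hQ : Qᵀ * Q = 1) (hσ : ∀ i, 0 < σ i)
    (hSVD : U * Vᵀ = P * Matrix.diagonal σ * Qᵀ)
    (D G : Matrix (Fin r) (Fin r) ℝ)
    (hD : D = (Uᵀ * U)⁻¹ * Uᵀ * P * Matrix.diagonal (fun i => Real.sqrt (σ i)))
    (hG : G = (Vᵀ * V)⁻¹ * Vᵀ * Q * Matrix.diagonal (fun i => Real.sqrt (σ i))) :
    D * Gᵀ = 1 ∧
    (U * D) * (V * G)ᵀ = U * Vᵀ ∧
    (U * D)ᵀ * (U * D) = (V * G)ᵀ * (V * G) ∧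
    ((U * D) * (V * G)ᵀ - Y) * (V * G) = 0 ∧
    ((U * D) * (V * G)ᵀ - Y)ᵀ * (U * D) = 0 := by
  set H := diagonal fun i => √(σ i)
  have hS := isUnit_det_diagonal_of_pos hσ
  have hHH : H * H = diagonal σ := diagonal_sqrt_mul_self fun i => (hσ i).le
  have hUD : U * D = P * H := by
    rw [hD, ← Matrix.mul_assoc, mul_inv_transpose_mul_mul_of_mul_transpose_eq hU hQ hS hSVD]
  have hSVD_transpose : V * Uᵀ = Q * (diagonal σ)ᵀ * Pᵀ := by
    simpa only [transpose_mul, transpose_transpose, Matrix.mul_assoc] using congrArg transpose hSVD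
  have hVG : V * G = Q * H := by
    rw [hG, ← Matrix.mul_assoc, mul_inv_transpose_mul_mul_of_mul_transpose_eq hV hP
      (by rwa [det_transpose]) hSVD_transpose]
  have hprod : U * D * (V * G)ᵀ = U * Vᵀ := by
    rw [hUD, hVG, transpose_mul, show Hᵀ = H from diagonal_transpose _, hSVD, ← hHH]
    simp only [Matrix.mul_assoc]
  refine ⟨?_, hprod, ?_, ?_, ?_⟩
  · refine eq_of_mul_mul_transpose_eq hU hV ?_
    simpa only [Matrix.mul_one, transpose_mul, Matrix.mul_assoc] using hprod
  · rw [hUD, hVG, transpose_mul, transpose_mul, Matrix.mul_assoc, ← Matrix.mul_assoc Pᵀ, hP,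
      Matrix.mul_assoc, ← Matrix.mul_assoc Qᵀ, hQ]
  · rw [hprod, ← Matrix.mul_assoc, hcrit1, Matrix.zero_mul]
  · rw [hprod, ← Matrix.mul_assoc, hcrit2, Matrix.zero_mul]
end
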